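/- For -3/5 < λ ≤ 0, the sextic q_λ(x,y) = 6x⁵y + 20λx³y³ + 6xy⁵ has no length-4 representation as a linear combination of sixth powers of real linear forms: there is no quartic h(x,y) = Σ c_i x^{4-i}y^i with four distinct real roots in P¹ lying in the kernel of the 3×5 catalecticant map of q_λ. Consequently the length of q_λ is at least 5. -/

import Mathlib

/-!
Apolarity, the easy half of Sylvester's theorem: if `q = ∑ k, λ_k (α_k x + β_k y)^6` and a quartic
`h` vanishes at every `(α_k, β_k)`, then the coefficient vector of `h` lies in the kernel of the
catalecticant of `q`. With at most four summands such an `h` with four distinct roots in `ℙ¹`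
exists (add fresh roots), so it suffices to show that the kernel contains no such `h`.
For `-1 < λ ≤ 0` the two outer kernel equations force `c₁ = c₃ = 0`; then `c₁ = 0` excludes the
root `(1 : 0)`, so `h = c₀x⁴ + c₂x²y² + c₄y⁴` with `c₀ ≠ 0` has two affine roots `u, v` with
`u² ≠ v²`, and Vieta gives `c₀ + λc₂ + c₄ = c₀ (1 - λ(u² + v²) + u²v²) ≠ 0`.
-/

open Polynomial Finset

section BinaryForms

variable {K : Type*} [Field K]

def binaryForm (d : ℕ) (a : ℕ → K) (x y : K) : K :=
  ∑ i ∈ range (d + 1), a i * x ^ (d - i) * y ^ i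

def PairwiseNonproportional {ι : Type*} (a b : ι → K) : Prop :=
  ∀ i j, i ≠ j → a i * b j - a j * b i ≠ 0

/-- The dehomogenization `∏ j, (e j + f j * y)` of `∏ j, (e j * x + f j * y)` at `x = 1`. -/
noncomputable def linearProduct {n : ℕ} (e f : Fin n → K) : K[X] :=
  ∏ j, (C (f j) * X + C (e j))

def moment {ι : Type*} [Fintype ι] (lam α β : ι → K) (d n : ℕ) : K :=
  ∑ k, lam k * α k ^ (d - n) * β k ^ n

theorem binaryForm_coeff_unique [Infinite K] {d : ℕ} {a b : ℕ → K}
    (h : ∀ x y, binaryForm d a x y = binaryForm d b x y) {i : ℕ} (hi : i ≤ d) : a i = b i := by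
  let p : (ℕ → K) → K[X] := fun a => ∑ m ∈ range (d + 1), C (a m) * X ^ m
  have hcoeff : ∀ a, (p a).coeff i = a i := fun a => by
    simp [p, finsetSum_coeff, Nat.lt_succ_of_le hi]
  have hp : p a = p b := Polynomial.funext fun y => by
    simpa [p, eval_finsetSum, binaryForm] using h 1 y
  rw [← hcoeff a, hp, hcoeff]

theorem natDegree_linearProduct_le {n : ℕ} (e f : Fin n → K) :
    (linearProduct e f).natDegree ≤ n := by
  refine (natDegree_prod_le _ _).trans ?_
  refine (sum_le_card_nsmul _ _ 1 fun j _ => natDegree_linear_le).trans ?_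
  simp

theorem coeff_linearProduct_top {n : ℕ} (e f : Fin n → K) :
    (linearProduct e f).coeff n = ∏ j, f j := by
  simpa [linearProduct] using coeff_prod_of_natDegree_le (s := univ) _ 1 fun j _ =>
    natDegree_linear_le (a := f j) (b := e j)

theorem coeff_linearProduct_zero {n : ℕ} (e f : Fin n → K) :
    (linearProduct e f).coeff 0 = ∏ j, e j := by
  simp [linearProduct, coeff_zero_prod]

theorem coeff_linearProduct_one_of_eq_zero {n : ℕ} {e f : Fin n → K} {i : Fin n} (hi : e i = 0) :
    (linearProduct e f).coeff 1 = f i * ∏ j ∈ univ.erase i, e j := by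
  rw [linearProduct, ← mul_prod_erase univ _ (mem_univ i), hi, map_zero, add_zero, mul_assoc,
    coeff_C_mul, coeff_X_mul, coeff_zero_prod]
  simp

theorem binaryForm_coeff_linearProduct {n : ℕ} (e f : Fin n → K) (x y : K) :
    binaryForm n (linearProduct e f).coeff x y = ∏ j, (e j * x + f j * y) := by
  rcases eq_or_ne x 0 with rfl | hx
  · rw [binaryForm, sum_range_succ, sum_eq_zero fun i hi => by
      simp [zero_pow (Nat.sub_ne_zero_of_lt (mem_range.1 hi))]]
    simp [coeff_linearProduct_top, prod_mul_distrib]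
  calc binaryForm n (linearProduct e f).coeff x y
      = x ^ n * (linearProduct e f).eval (y / x) := by
        rw [eval_eq_sum_range' (Nat.lt_succ_of_le (natDegree_linearProduct_le e f)), mul_sum]
        refine sum_congr rfl fun i hi => ?_
        rw [div_pow, ← pow_sub_mul_pow x (Nat.lt_succ_iff.1 (mem_range.1 hi))]
        field_simp
    _ = ∏ j, (e j * x + f j * y) := by
        rw [linearProduct, eval_prod, ← Fin.prod_const n x, ← prod_mul_distrib]
        refine prod_congr rfl fun j _ => ?_
        simp only [eval_add, eval_mul, eval_C, eval_X]
        field_simp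
        ring

theorem coeff_eq_coeff_linearProduct [Infinite K] {n : ℕ} {c : ℕ → K} {e f : Fin n → K}
    (h : ∀ x y, binaryForm n c x y = ∏ j, (e j * x + f j * y)) {i : ℕ} (hi : i ≤ n) :
    c i = (linearProduct e f).coeff i :=
  binaryForm_coeff_unique (fun x y => by rw [h, binaryForm_coeff_linearProduct]) hi

theorem PairwiseNonproportional.exists_extend [Infinite K] {r n : ℕ}
    {α β : Fin r → K} (h : PairwiseNonproportional α β) (hnz : ∀ k, α k ≠ 0 ∨ β k ≠ 0)
    (hrn : r ≤ n) :
    ∃ a b : Fin n → K, PairwiseNonproportional a b ∧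
      ∀ k, a (Fin.castLE hrn k) = α k ∧ b (Fin.castLE hrn k) = β k := by
  -- the new points are `(1, t m)` with the slopes `t m` distinct and different from all `β k / α k`
  obtain ⟨t, ht⟩ : ∃ t : ℕ ↪ K, ∀ m k, α k * t m - β k ≠ 0 := by
    let S : Set K := Set.range fun k => β k / α k
    let s : ℕ ↪ ↥Sᶜ := (Set.finite_range _).infinite_compl.natEmbedding
    refine ⟨s.trans (Function.Embedding.subtype _), fun m k hk => ?_⟩
    rcases eq_or_ne (α k) 0 with hα | hα
    · exact (hnz k).resolve_left (not_not.2 hα) (by simpa [hα] using hk)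
    · have hk : α k * s m - β k = 0 := hk
      exact (s m).2 ⟨k, by rw [div_eq_iff hα]; linear_combination -hk⟩
  refine ⟨fun i => if hi : (i : ℕ) < r then α ⟨i, hi⟩ else 1,
    fun i => if hi : (i : ℕ) < r then β ⟨i, hi⟩ else t i, fun i j hij => ?_, fun k => by simp⟩
  by_cases hi : (i : ℕ) < r <;> by_cases hj : (j : ℕ) < r <;>
    simp only [hi, hj, dite_true, dite_false]
  · exact h _ _ (by simpa [Fin.ext_iff] using hij)
  · simpa using ht j ⟨i, hi⟩
  · simpa [neg_sub] using neg_ne_zero.2 (ht i ⟨j, hj⟩)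
  · simpa [sub_eq_zero] using fun hji => hij (Fin.ext (t.injective hji).symm)

variable {ι : Type*} [Fintype ι]

theorem sum_mul_pow_eq_binaryForm (lam α β : ι → K) (d : ℕ) (x y : K) :
    ∑ k, lam k * (α k * x + β k * y) ^ d
      = binaryForm d (fun m => d.choose m * moment lam α β d m) x y := by
  simp only [binaryForm, moment, mul_sum, sum_mul]
  rw [sum_comm]
  refine sum_congr rfl fun k _ => ?_
  rw [add_comm, add_pow, mul_sum]
  refine sum_congr rfl fun m _ => ?_
  ring

theorem moment_eq_of_forall_eq_sum_pow [CharZero K] {lam α β : ι → K} {d : ℕ} {μ : ℕ → K}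
    (h : ∀ x y, binaryForm d (fun m => d.choose m * μ m) x y = ∑ k, lam k * (α k * x + β k * y) ^ d)
    {n : ℕ} (hn : n ≤ d) : moment lam α β d n = μ n := by
  have : (d.choose n : K) * μ n = d.choose n * moment lam α β d n :=
    binaryForm_coeff_unique (fun x y => (h x y).trans (sum_mul_pow_eq_binaryForm ..)) hn
  exact (mul_left_cancel₀ (Nat.cast_ne_zero.2 (Nat.choose_pos hn).ne') this).symm

theorem sum_mul_moment_eq_zero {lam α β : ι → K} {s j d : ℕ} {c : ℕ → K}
    (hvan : ∀ k, binaryForm s c (α k) (β k) = 0) (hd : s + j ≤ d) :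
    ∑ i ∈ range (s + 1), c i * moment lam α β d (i + j) = 0 := by
  calc ∑ i ∈ range (s + 1), c i * moment lam α β d (i + j)
      = ∑ k, lam k * α k ^ (d - s - j) * β k ^ j * binaryForm s c (α k) (β k) := by
        simp only [moment, binaryForm, mul_sum]
        rw [sum_comm]
        refine sum_congr rfl fun k _ => sum_congr rfl fun i hi => ?_
        have hi : i ≤ s := Nat.lt_succ_iff.1 (mem_range.1 hi)
        rw [show d - (i + j) = (d - s - j) + (s - i) by omega]
        ring
    _ = 0 := by simp [hvan]

end BinaryForms

theorem sq_ne_sq_or_sq_ne_sq {R : Type*} [CommRing R] [NoZeroDivisors R] {a b c : R}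
    (hab : a ≠ b) (hac : a ≠ c) (hbc : b ≠ c) : a ^ 2 ≠ b ^ 2 ∨ a ^ 2 ≠ c ^ 2 := by
  by_contra! ⟨hb, hc⟩
  rcases sq_eq_sq_iff_eq_or_eq_neg.1 hb.symm with rfl | rfl
  · exact hab rfl
  rcases sq_eq_sq_iff_eq_or_eq_neg.1 hc.symm with rfl | rfl
  · exact hac rfl
  · exact hbc rfl

theorem add_mul_add_ne_zero_of_biquadratic {c₀ c₂ c₄ l u v : ℝ} (hc₀ : c₀ ≠ 0) (hl : l ≤ 0)
    (huv : u ^ 2 ≠ v ^ 2) (hu : c₀ * u ^ 4 + c₂ * u ^ 2 + c₄ = 0)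
    (hv : c₀ * v ^ 4 + c₂ * v ^ 2 + c₄ = 0) : c₀ + l * c₂ + c₄ ≠ 0 := by
  -- Vieta for the quadratic `c₀ s² + c₂ s + c₄` with roots `u²` and `v²`
  have hc₂ : c₂ = -c₀ * (u ^ 2 + v ^ 2) := by
    have : (u ^ 2 - v ^ 2) * (c₀ * (u ^ 2 + v ^ 2) + c₂) = 0 := by linear_combination hu - hv
    linear_combination (mul_eq_zero.1 this).resolve_left (sub_ne_zero.2 huv)
  have hc₄ : c₄ = c₀ * u ^ 2 * v ^ 2 := by linear_combination hu - u ^ 2 * hc₂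
  have hpos : 0 < 1 - l * (u ^ 2 + v ^ 2) + u ^ 2 * v ^ 2 := by
    nlinarith [mul_nonneg (neg_nonneg.2 hl) (add_nonneg (sq_nonneg u) (sq_nonneg v)),
      mul_nonneg (sq_nonneg u) (sq_nonneg v)]
  rw [hc₂, hc₄, show c₀ + l * (-c₀ * (u ^ 2 + v ^ 2)) + c₀ * u ^ 2 * v ^ 2
    = c₀ * (1 - l * (u ^ 2 + v ^ 2) + u ^ 2 * v ^ 2) by ring]
  exact mul_ne_zero hc₀ hpos.ne'

theorem quartic_hankel_middle_ne_zero {l : ℝ} (hl₁ : -1 < l) (hl₂ : l ≤ 0) {c : ℕ → ℝ}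
    {e f : Fin 4 → ℝ} (hef : PairwiseNonproportional e f)
    (hprod : ∀ x y, binaryForm 4 c x y = ∏ i, (e i * x + f i * y))
    (hk₁ : c 1 + l * c 3 = 0) (hk₃ : l * c 1 + c 3 = 0) : c 0 + l * c 2 + c 4 ≠ 0 := by
  have hc₃ : c 3 = 0 := by
    have : (1 - l ^ 2) * c 3 = 0 := by linear_combination hk₃ - l * hk₁
    exact (mul_eq_zero.1 this).resolve_left (by nlinarith)
  have hc₁ : c 1 = 0 := by linear_combination hk₁ - l * hc₃
  -- a vanishing `x³y`-coefficient rules out the root `(1 : 0)`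
  have he : ∀ i, e i ≠ 0 := by
    intro i hei
    have hj : ∀ j, j ≠ i → e j * f i ≠ 0 := fun j hji => by
      simpa [hei] using hef i j hji.symm
    obtain ⟨j, hji⟩ := exists_ne i
    have hfi : f i ≠ 0 := right_ne_zero_of_mul (hj j hji)
    have := coeff_linearProduct_one_of_eq_zero (f := f) hei
    rw [← coeff_eq_coeff_linearProduct hprod (by norm_num), hc₁] at this
    exact mul_ne_zero hfi (prod_ne_zero_iff.2 fun j hj' => left_ne_zero_of_mul
      (hj j (ne_of_mem_erase hj'))) this.symm
  have hc₀ : c 0 ≠ 0 := by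
    rw [coeff_eq_coeff_linearProduct hprod (Nat.zero_le _), coeff_linearProduct_zero]
    exact prod_ne_zero_iff.2 fun i _ => he i
  let t : Fin 4 → ℝ := fun i => -f i / e i
  have ht : Function.Injective t := fun i j hij => by
    by_contra hne
    refine hef i j hne ?_
    rw [div_eq_div_iff (he i) (he j)] at hij
    linear_combination hij
  have hroot : ∀ i, c 0 * t i ^ 4 + c 2 * t i ^ 2 + c 4 = 0 := fun i => by
    have := hprod (t i) 1
    rw [prod_eq_zero (mem_univ i) (by have := he i; simp only [t]; field_simp; ring)] at this
    simpa [binaryForm, sum_range_succ, hc₁, hc₃] using this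
  rcases sq_ne_sq_or_sq_ne_sq (ht.ne (by decide : (0 : Fin 4) ≠ 1))
    (ht.ne (by decide : (0 : Fin 4) ≠ 2)) (ht.ne (by decide : (1 : Fin 4) ≠ 2)) with h | h
  · exact add_mul_add_ne_zero_of_biquadratic hc₀ hl₂ h (hroot 0) (hroot 1)
  · exact add_mul_add_ne_zero_of_biquadratic hc₀ hl₂ h (hroot 0) (hroot 2)

theorem five_le_of_eq_sum_pow_six {l : ℝ} (hl₁ : -1 < l) (hl₂ : l ≤ 0) {r : ℕ}
    {lam α β : Fin r → ℝ} (hαβ : PairwiseNonproportional α β)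
    (hrep : ∀ x y : ℝ, 6*x^5*y + 20*l*x^3*y^3 + 6*x*y^5
      = ∑ k : Fin r, lam k * (α k * x + β k * y)^6) : 5 ≤ r := by
  by_contra! hr
  -- `μ n` is the coefficient of `x ^ (6 - n) * y ^ n` in `q_λ`, divided by `choose 6 n`
  let μ : ℕ → ℝ := fun n => if n = 1 ∨ n = 5 then 1 else if n = 3 then l else 0
  have hμ : ∀ n ≤ 6, moment lam α β 6 n = μ n := fun n hn =>
    moment_eq_of_forall_eq_sum_pow (fun x y => by
      rw [← hrep]; simp [binaryForm, sum_range_succ, μ, Nat.choose]) hn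
  have hnz : ∀ k, α k ≠ 0 ∨ β k ≠ 0 := by
    by_contra! ⟨k, hαk, hβk⟩
    have hk : ∀ m, m = k := fun m => by
      by_contra hmk
      exact hαβ m k hmk (by simp [hαk, hβk])
    have := hμ 1 (by norm_num)
    simp [moment, μ, hk _ ▸ hβk] at this
  obtain ⟨a, b, hab, hext⟩ := hαβ.exists_extend hnz (by omega : r ≤ 4)
  have hprod := binaryForm_coeff_linearProduct b (-a)
  have hvan : ∀ k, binaryForm 4 (linearProduct b (-a)).coeff (α k) (β k) = 0 := fun k => by
    rw [hprod]
    refine prod_eq_zero (mem_univ (Fin.castLE (by omega) k)) ?_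
    simp only [Pi.neg_apply, (hext k).1, (hext k).2]
    ring
  have hankel : ∀ j ≤ 2, ∑ i ∈ range 5, (linearProduct b (-a)).coeff i * μ (i + j) = 0 :=
    fun j hj => by
      rw [← sum_mul_moment_eq_zero (lam := lam) hvan (by omega : 4 + j ≤ 6)]
      exact sum_congr rfl fun i hi => by rw [hμ _ (by simp at hi; omega)]
  have hba : PairwiseNonproportional b (-a) := fun i j hij => by
    simpa [neg_sub, sub_eq_add_neg, add_comm, mul_comm] using hab i j hij
  have h₀ := hankel 0 (by norm_num)
  have h₁ := hankel 1 (by norm_num)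
  have h₂ := hankel 2 (by norm_num)
  norm_num [sum_range_succ, μ] at h₀ h₁ h₂
  exact quartic_hankel_middle_ne_zero hl₁ hl₂ hba hprod (by linear_combination h₀)
    (by linear_combination h₂) (by linear_combination h₁)

theorem stmt17 (l : ℝ) (hl1 : -3/5 < l) (hl2 : l ≤ 0) :
    (¬ ∃ (c : ℕ → ℝ) (e f : Fin 4 → ℝ),
        (∀ i j, i ≠ j → e i * f j - e j * f i ≠ 0) ∧
        (∀ x y : ℝ, ∑ i ∈ Finset.range 5, c i * x^(4-i) * y^i
          = ∏ i : Fin 4, (e i * x + f i * y)) ∧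
        c 1 + l * c 3 = 0 ∧ c 0 + l * c 2 + c 4 = 0 ∧ l * c 1 + c 3 = 0) ∧
    (∀ (r : ℕ) (lam α β : Fin r → ℝ),
        (∀ k, lam k ≠ 0) →
        (∀ k m, k ≠ m → α k * β m - α m * β k ≠ 0) →
        (∀ x y : ℝ, 6*x^5*y + 20*l*x^3*y^3 + 6*x*y^5
          = ∑ k : Fin r, lam k * (α k * x + β k * y)^6) →
        5 ≤ r) := by
  have hl : -1 < l := by linarith
  refine ⟨?_, fun r lam α β _ hαβ hrep => five_le_of_eq_sum_pow_six hl hl2 hαβ hrep⟩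
  rintro ⟨c, e, f, hef, hprod, hk₁, hk₂, hk₃⟩
  exact quartic_hankel_middle_ne_zero hl hl2 hef hprod hk₁ hk₃ hk₂
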